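/- arXiv:math/0209101 — 4 statements merged into one kernel-verified Lean document; each statement's English description precedes it below -/
import Mathlib

section
/- Let P be a finite-dimensional basic symmetric ℂ-algebra with symmetric linear functional φ satisfying Rad(φ) = 0, with mutually orthogonal primitive idempotents e_1, ..., e_k summing to 1. If M is a minimal two-sided ideal of P, then e_i M e_i = M for some index i (it is not possible that e_i M e_j = M with i ≠ j). -/
lemma aux_left_inv {P : Type*} [Ring P] {c : P}
    (hc : c ∈ Ideal.jacobson (⊥ : Ideal P)) : ∃ u : P, u * (1 - c) = 1 := by
  by_contra h
  push_neg at h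
  have h1 : (1 : P) ∉ Ideal.span {1 - c} := by
    intro h1
    obtain ⟨r, hr⟩ := Submodule.mem_span_singleton.mp h1
    exact h r (by simpa [smul_eq_mul] using hr)
  have hne : Ideal.span {1 - c} ≠ ⊤ := fun ht => h1 (ht ▸ Submodule.mem_top)
  obtain ⟨m, hmax, hle⟩ := Ideal.exists_le_maximal _ hne
  have hcm : c ∈ m := by
    rw [Ideal.jacobson] at hc
    exact Submodule.mem_sInf.mp hc m ⟨bot_le, hmax⟩
  have : (1 : P) ∈ m := by
    have := m.add_mem (hle (Ideal.subset_span rfl)) hcm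
    simpa using this
  exact hmax.ne_top ((Ideal.eq_top_iff_one m).mpr this)

lemma aux_nilpotent {P : Type*} [Ring P] [Algebra ℂ P] [FiniteDimensional ℂ P] :
    ∃ n : ℕ, ((Ideal.jacobson (⊥ : Ideal P)).restrictScalars ℂ) ^ (n + 1) = ⊥ := by
  set J : Submodule ℂ P := (Ideal.jacobson (⊥ : Ideal P)).restrictScalars ℂ with hJdef
  have hJstab : ∀ p : P, ∀ j ∈ J, p * j ∈ J := fun p j hj =>
    Ideal.mul_mem_left _ p hj
  have hstab : ∀ t : ℕ, ∀ p : P, ∀ u ∈ J ^ (t + 1), p * u ∈ J ^ (t + 1) := by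
    intro t p u hu
    rw [pow_succ'] at hu ⊢
    refine Submodule.mul_induction_on hu (fun j hj w hw => ?_) (fun a b ha hb => ?_)
    · rw [← mul_assoc]
      exact Submodule.mul_mem_mul (hJstab p j hj) hw
    · rw [mul_add]; exact Submodule.add_mem _ ha hb
  have hmono : ∀ t : ℕ, J ^ (t + 2) ≤ J ^ (t + 1) := by
    intro t
    rw [show t + 2 = (t + 1) + 1 by ring, pow_succ']
    exact Submodule.mul_le.mpr (fun j hj w hw => hstab t j w hw)
  have hanti : ∀ s t : ℕ, s ≤ t → J ^ (t + 1) ≤ J ^ (s + 1) := by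
    intro s t hst
    induction t with
    | zero => simp [Nat.le_zero.mp hst]
    | succ t ih =>
      rcases Nat.lt_or_ge s (t + 1) with h | h
      · exact le_trans (hmono t) (ih (Nat.lt_succ_iff.mp h))
      · have : s = t + 1 := le_antisymm hst h
        subst this; exact le_rfl
  obtain ⟨n, hn⟩ := IsArtinian.monotone_stabilizes
    (⟨fun t => OrderDual.toDual (J ^ (t + 1)), fun s t hst => hanti s t hst⟩ :
      ℕ →o (Submodule ℂ P)ᵒᵈ)
  set K : Submodule ℂ P := J ^ (n + 1) with hKdef
  have hKK : K * K = K := by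
    have h2 : J ^ (n + 1) = J ^ (2 * n + 1 + 1) := hn (2 * n + 1) (by omega)
    rw [hKdef, ← pow_add]
    rw [show (n + 1) + (n + 1) = 2 * n + 1 + 1 by ring]
    exact h2.symm
  have hKJ : K ≤ J := by
    have := hanti 0 n (Nat.zero_le n)
    rwa [pow_one] at this
  have hKstab : ∀ p : P, ∀ u ∈ K, p * u ∈ K := hstab n
  refine ⟨n, ?_⟩
  by_contra hKbot
  obtain ⟨a, haK, ha0⟩ := Submodule.exists_mem_ne_zero_of_ne_bot hKbot
  set S : Set (Submodule ℂ P) :=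
    {L | (∀ p : P, ∀ y ∈ L, p * y ∈ L) ∧ ∃ b ∈ K, ∃ x ∈ L, b * x ≠ 0} with hSdef
  have htop : (⊤ : Submodule ℂ P) ∈ S :=
    ⟨fun p y _ => Submodule.mem_top, a, haK, 1, Submodule.mem_top, by simpa using ha0⟩
  obtain ⟨L, hLS, hmin⟩ := IsArtinian.set_has_minimal S ⟨⊤, htop⟩
  obtain ⟨hLstab, b, hbK, x, hxL, hbx⟩ := hLS
  have hcd : ∃ c ∈ K, ∃ d ∈ K, c * (d * x) ≠ 0 := by
    by_contra hall
    push_neg at hall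
    apply hbx
    rw [← hKK] at hbK
    refine Submodule.mul_induction_on hbK (fun c hc d hd => ?_) (fun y z hy hz => ?_)
    · rw [mul_assoc]; exact hall c hc d hd
    · rw [add_mul, hy, hz, add_zero]
  obtain ⟨c, hcK, d, hdK, hcdx⟩ := hcd
  set L' : Submodule ℂ P := Submodule.map (LinearMap.mulRight ℂ x) K with hL'def
  have hL'S : L' ∈ S := by
    refine ⟨?_, c, hcK, d * x, ⟨d, hdK, rfl⟩, hcdx⟩
    rintro p y ⟨w, hwK, rfl⟩
    exact ⟨p * w, hKstab p w hwK, by simp [LinearMap.mulRight_apply, mul_assoc]⟩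
  have hL'L : L' ≤ L := by
    rintro y ⟨w, hwK, rfl⟩
    exact hLstab w x hxL
  have hLL' : L' = L := by
    by_contra hne
    exact hmin L' hL'S (lt_of_le_of_ne hL'L hne)
  have hxL' : x ∈ L' := hLL' ▸ hxL
  obtain ⟨w, hwK, hwx⟩ := hxL'
  simp only [LinearMap.mulRight_apply] at hwx
  obtain ⟨u, hu⟩ := aux_left_inv (hKJ hwK)
  have hx0 : x = 0 := by
    have h1 : (1 - w) * x = 0 := by rw [sub_mul, one_mul, hwx, sub_self]
    calc x = (u * (1 - w)) * x := by rw [hu, one_mul]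
    _ = u * ((1 - w) * x) := by rw [mul_assoc]
    _ = 0 := by rw [h1, mul_zero]
  rw [hx0, mul_zero] at hbx
  exact hbx rfl

/-- In a finite-dimensional basic symmetric `ℂ`-algebra `P` with symmetric
linear functional `φ`, `Rad(φ) = 0`, and mutually orthogonal primitive idempotents
`e_1, ..., e_k` summing to `1`, every minimal two-sided ideal `M` satisfies
`e_i M e_i = M` for some `i`, and `e_i M e_j = M` is impossible for `i ≠ j`. -/
theorem stmt_3 {P : Type*} [Ring P] [Algebra ℂ P] [FiniteDimensional ℂ P]
    (φ : P →ₗ[ℂ] ℂ) (hsymm : ∀ a b : P, φ (a * b) = φ (b * a))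
    (hrad : ∀ a : P, (∀ x y : P, φ (x * a * y) = 0) → a = 0)
    (k : ℕ) (e : Fin k → P)
    (hidem : ∀ i, e i * e i = e i)
    (horth : ∀ i j, i ≠ j → e i * e j = 0)
    (hsum : ∑ i, e i = 1)
    (hprim : ∀ i, ∀ f : P, f * f = f → f * e i = f → e i * f = f → f = 0 ∨ f = e i)
    (hbasic : ∀ a : P, ∃ c : Fin k → ℂ,
      a - ∑ i, c i • e i ∈ Ideal.jacobson (⊥ : Ideal P))
    (M : TwoSidedIdeal P) (hM : IsAtom M) :
    (∃ i, {x : P | ∃ m ∈ M, x = e i * m * e i} = (M : Set P)) ∧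
    (∀ i j, i ≠ j → {x : P | ∃ m ∈ M, x = e i * m * e j} ≠ (M : Set P)) := by
  classical
  -- nonzero element of M
  have hMne : ∃ m0, m0 ∈ M ∧ m0 ≠ 0 := by
    by_contra h
    push_neg at h
    exact hM.1 (eq_bot_iff.mpr fun x hx => (h x hx : x = 0))
  -- M as a ℂ-submodule
  have hMsmul : ∀ (c : ℂ), ∀ m ∈ M, c • m ∈ M := fun c m hm => by
    rw [Algebra.smul_def]; exact M.mul_mem_left _ _ hm
  set M'' : Submodule ℂ P :=
    { carrier := {x : P | x ∈ M}
      add_mem' := fun ha hb => M.add_mem ha hb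
      zero_mem' := M.zero_mem
      smul_mem' := fun c m hm => hMsmul c m hm } with hM''def
  set Jc : Submodule ℂ P := (Ideal.jacobson (⊥ : Ideal P)).restrictScalars ℂ with hJc
  have hmemM : ∀ (i j : Fin k), ∀ m ∈ M, e i * m * e j ∈ M := fun i j m hm =>
    M.mul_mem_right _ _ (M.mul_mem_left _ _ hm)
  -- J·M = 0
  have hJM : ∀ ν ∈ Ideal.jacobson (⊥ : Ideal P), ∀ m ∈ M, ν * m = 0 := by
    intro ν hν m hm
    obtain ⟨n, hn⟩ := aux_nilpotent (P := P)
    have hDleft : ∀ (x y : P), y ∈ (Jc * M'' : Submodule ℂ P) →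
        x * y ∈ (Jc * M'' : Submodule ℂ P) := by
      intro x y hy
      refine Submodule.mul_induction_on hy (fun j hj w hw => ?_) (fun a b ha hb => ?_)
      · rw [← mul_assoc]
        exact Submodule.mul_mem_mul (Ideal.mul_mem_left _ x hj) hw
      · rw [mul_add]; exact Submodule.add_mem _ ha hb
    have hDright : ∀ (x y : P), x ∈ (Jc * M'' : Submodule ℂ P) →
        x * y ∈ (Jc * M'' : Submodule ℂ P) := by
      intro x y hx
      refine Submodule.mul_induction_on hx (fun j hj w hw => ?_) (fun a b ha hb => ?_)
      · rw [mul_assoc]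
        exact Submodule.mul_mem_mul hj (M.mul_mem_right _ _ hw)
      · rw [add_mul]; exact Submodule.add_mem _ ha hb
    set D : TwoSidedIdeal P := TwoSidedIdeal.mk' (Jc * M'' : Submodule ℂ P)
      (Submodule.zero_mem _) (fun ha hb => Submodule.add_mem _ ha hb)
      (fun ha => Submodule.neg_mem _ ha) (fun h => hDleft _ _ h)
      (fun h => hDright _ _ h) with hDdef
    have hDM : D ≤ M := by
      rw [TwoSidedIdeal.le_iff]
      intro x hx
      rw [SetLike.mem_coe, hDdef, TwoSidedIdeal.mem_mk'] at hx
      refine Submodule.mul_induction_on hx (fun j hj w hw => ?_) (fun a b ha hb => ?_)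
      · exact M.mul_mem_left _ _ hw
      · exact M.add_mem ha hb
    rcases lt_or_eq_of_le hDM with hlt | heq
    · have hD0 : D = ⊥ := hM.2 D hlt
      have hmem : ν * m ∈ D := by
        rw [hDdef, TwoSidedIdeal.mem_mk']
        exact Submodule.mul_mem_mul hν hm
      rw [hD0] at hmem
      exact hmem
    · exfalso
      have hMD : M'' ≤ (Jc * M'' : Submodule ℂ P) := by
        intro z hz
        have hzD : z ∈ D := heq ▸ (hz : z ∈ M)
        rwa [hDdef, TwoSidedIdeal.mem_mk'] at hzD
      have hpow : ∀ t : ℕ, M'' ≤ (Jc ^ (t + 1) * M'' : Submodule ℂ P) := by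
        intro t
        induction t with
        | zero => rw [pow_one]; exact hMD
        | succ t ih =>
          refine le_trans ih ?_
          calc (Jc ^ (t + 1) * M'' : Submodule ℂ P)
              ≤ Jc ^ (t + 1) * (Jc * M'') := mul_le_mul' le_rfl hMD
            _ = Jc ^ (t + 2) * M'' := by
                rw [← mul_assoc, ← pow_succ]
      obtain ⟨m0, hm0, hm00⟩ := hMne
      have := hpow n (show m0 ∈ M'' from hm0)
      rw [hn, Submodule.bot_mul] at this
      exact hm00 (by simpa using this)
  -- M·J = 0, via the symmetry of φ
  have hMJ : ∀ m ∈ M, ∀ ν ∈ Ideal.jacobson (⊥ : Ideal P), m * ν = 0 := by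
    intro m hm ν hν
    apply hrad
    intro x y
    have h1 : x * (m * ν) * y = (x * m) * (ν * y) := by
      simp only [mul_assoc]
    rw [h1, hsymm (x * m) (ν * y)]
    have h2 : (ν * y) * (x * m) = ν * (y * x * m) := by
      simp only [mul_assoc]
    rw [h2, hJM ν hν (y * x * m) (M.mul_mem_left _ _ hm), map_zero]
  -- Part 2 : e_i M e_j = M is impossible for i ≠ j
  have part2 : ∀ i j, i ≠ j → {x : P | ∃ m ∈ M, x = e i * m * e j} ≠ (M : Set P) := by
    intro i j hij hset
    have hei : ∀ m ∈ M, e i * m = m ∧ m * e j = m := by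
      intro m hm
      have hmem : m ∈ {x : P | ∃ m ∈ M, x = e i * m * e j} := by
        rw [hset]; exact hm
      obtain ⟨m', hm', rfl⟩ := hmem
      constructor
      · rw [← mul_assoc, ← mul_assoc, hidem i]
      · rw [mul_assoc, hidem j]
    obtain ⟨m0, hm0, hm00⟩ := hMne
    apply hm00
    apply hrad
    intro x y
    have h1 : x * m0 * y = x * (m0 * y) := by rw [mul_assoc]
    rw [h1, hsymm x (m0 * y)]
    have h2 : m0 * y * x = m0 * (y * x) := by rw [mul_assoc]
    rw [h2]
    set z := m0 * (y * x) with hz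
    have hzM : z ∈ M := M.mul_mem_right _ _ hm0
    have hz1 : e i * z = z := (hei z hzM).1
    have hz2 : z * e j = z := (hei z hzM).2
    calc φ z = φ (e i * z) := by rw [hz1]
      _ = φ (z * e i) := hsymm _ _
      _ = φ ((z * e j) * e i) := by rw [hz2]
      _ = φ (z * (e j * e i)) := by rw [mul_assoc]
      _ = 0 := by rw [horth j i (Ne.symm hij), mul_zero, map_zero]
  -- the sets e_i M e_j are two-sided ideals, by the basic hypothesis
  have hleft : ∀ (x : P) (i j : Fin k) (m : P), m ∈ M →
      ∃ m' ∈ M, x * (e i * m * e j) = e i * m' * e j := by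
    intro x i j m hm
    obtain ⟨c, hc⟩ := hbasic x
    refine ⟨c i • m, hMsmul _ _ hm, ?_⟩
    have hx : x = (∑ l, c l • e l) + (x - ∑ l, c l • e l) := by abel
    rw [hx, add_mul, hJM _ hc _ (hmemM i j m hm), add_zero, Finset.sum_mul,
      Finset.sum_eq_single i ?_ ?_]
    · rw [smul_mul_assoc, ← mul_assoc, ← mul_assoc, hidem i,
        mul_smul_comm, smul_mul_assoc]
    · intro l _ hl
      rw [smul_mul_assoc, ← mul_assoc, ← mul_assoc, horth l i hl, zero_mul,
        zero_mul, smul_zero]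
    · intro h; exact absurd (Finset.mem_univ i) h
  have hright : ∀ (x : P) (i j : Fin k) (m : P), m ∈ M →
      ∃ m' ∈ M, (e i * m * e j) * x = e i * m' * e j := by
    intro x i j m hm
    obtain ⟨c, hc⟩ := hbasic x
    refine ⟨c j • m, hMsmul _ _ hm, ?_⟩
    have hx : x = (∑ l, c l • e l) + (x - ∑ l, c l • e l) := by abel
    rw [hx, mul_add, hMJ _ (hmemM i j m hm) _ hc, add_zero, Finset.mul_sum,
      Finset.sum_eq_single j ?_ ?_]
    · rw [mul_smul_comm, mul_assoc, mul_assoc, hidem j, ← mul_assoc,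
        mul_smul_comm, smul_mul_assoc]
    · intro l _ hl
      rw [mul_smul_comm, mul_assoc, mul_assoc, horth j l (Ne.symm hl), mul_zero,
        mul_zero, smul_zero]
    · intro h; exact absurd (Finset.mem_univ j) h
  have hSideal : ∀ (i j : Fin k) (m0' : P), m0' ∈ M → e i * m0' * e j ≠ 0 →
      {x : P | ∃ m ∈ M, x = e i * m * e j} = (M : Set P) := by
    intro i j m0' hm0' hne
    set S : Set P := {x : P | ∃ m ∈ M, x = e i * m * e j} with hSdef
    have hzeroS : (0 : P) ∈ S := ⟨0, M.zero_mem, by simp⟩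
    have haddS : ∀ {x y : P}, x ∈ S → y ∈ S → x + y ∈ S := by
      rintro x y ⟨m1, h1, rfl⟩ ⟨m2, h2, rfl⟩
      exact ⟨m1 + m2, M.add_mem h1 h2, by noncomm_ring⟩
    have hnegS : ∀ {x : P}, x ∈ S → -x ∈ S := by
      rintro x ⟨m1, h1, rfl⟩
      exact ⟨-m1, M.neg_mem h1, by noncomm_ring⟩
    have hmlS : ∀ {x y : P}, y ∈ S → x * y ∈ S := by
      rintro x y ⟨m1, h1, rfl⟩
      obtain ⟨m', hm', he⟩ := hleft x i j m1 h1
      exact ⟨m', hm', he⟩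
    have hmrS : ∀ {x y : P}, x ∈ S → x * y ∈ S := by
      rintro x y ⟨m1, h1, rfl⟩
      obtain ⟨m', hm', he⟩ := hright y i j m1 h1
      exact ⟨m', hm', he⟩
    set D : TwoSidedIdeal P := TwoSidedIdeal.mk' S hzeroS haddS hnegS hmlS hmrS
      with hDdef
    have hDM : D ≤ M := by
      rw [TwoSidedIdeal.le_iff]
      intro x hx
      rw [SetLike.mem_coe, hDdef, TwoSidedIdeal.mem_mk'] at hx
      obtain ⟨m1, h1, rfl⟩ := hx
      exact hmemM i j m1 h1
    have hcoeD : (D : Set P) = S := TwoSidedIdeal.coe_mk' _ _ _ _ _ _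
    rcases lt_or_eq_of_le hDM with hlt | heq
    · exfalso
      have hD0 : D = ⊥ := hM.2 D hlt
      have hmem : e i * m0' * e j ∈ D := by
        rw [hDdef, TwoSidedIdeal.mem_mk']
        exact ⟨m0', hm0', rfl⟩
      rw [hD0] at hmem
      exact hne hmem
    · rw [← hSdef] at *
      rw [← hcoeD, heq]
  constructor
  · obtain ⟨m0, hm0, hm00⟩ := hMne
    have hdecomp : m0 = ∑ j, ∑ i, e i * m0 * e j := by
      conv_lhs => rw [← one_mul m0, ← mul_one (1 * m0), ← hsum]
      rw [Finset.mul_sum]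
      refine Finset.sum_congr rfl fun j _ => ?_
      rw [Finset.sum_mul, Finset.sum_mul]
    have hex : ∃ i j, e i * m0 * e j ≠ 0 := by
      by_contra h
      push_neg at h
      apply hm00
      rw [hdecomp]
      exact Finset.sum_eq_zero fun j _ => Finset.sum_eq_zero fun i _ => h i j
    obtain ⟨i, j, hij0⟩ := hex
    by_cases hij : i = j
    · subst hij
      exact ⟨i, hSideal i i m0 hm0 hij0⟩
    · exact absurd (hSideal i j m0 hm0 hij0) (part2 i j hij)
  · exact part2
end

section
/- Let P be a finite-dimensional indecomposable basic symmetric ℂ-algebra with symmetric linear functional φ, Rad(φ) = 0, and orthogonal primitive idempotents e_1,...,e_k summing to 1. If P has two isomorphic minimal two-sided ideals M and N with M ≠ N, then L = {(a,b) ∈ M ⊕ N : φ(a) + φ(b) = 0} yields a nonzero two-sided ideal of P annihilated by φ, contradicting Rad(φ) = 0; hence distinct minimal two-sided ideals of P are pairwise non-isomorphic as P-bimodules. -/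
/-!
By Nakayama's lemma `J M = 0` for a minimal two-sided ideal `M` (`J` the Jacobson radical), and
then `M J = 0` because `φ` is symmetric and nondegenerate. As `P` is basic, every element acts
on a nonzero corner `u = eᵢ m eⱼ` of `M` by a scalar on either side, and a bimodule isomorphism
`f : M ≅ N` carries these two characters to `f u ∈ N`. Then `φ (f u) ≠ 0` and
`u - (φ u / φ (f u)) • f u` lies in `Rad(φ) = 0`, so `u ∈ M ⊓ N = 0`, a contradiction.
-/

theorem TwoSidedIdeal.jacobson_mul_eq_zero_of_isAtom {R : Type*} [Ring R] [IsNoetherianRing R]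
    {M : TwoSidedIdeal R} (hM : IsAtom M) {j m : R} (hj : j ∈ Ring.jacobson R) (hm : m ∈ M) :
    j * m = 0 := by
  have hKM : (Ring.jacobson R * M.asIdeal).toTwoSided ≤ M := fun x hx =>
    mem_asIdeal.1 (Ideal.mul_le_right (Ideal.mem_toTwoSided.1 hx))
  have hjm : j * m ∈ (Ring.jacobson R * M.asIdeal).toTwoSided :=
    Ideal.mem_toTwoSided.2 (Ideal.mul_mem_mul hj (mem_asIdeal.2 hm))
  rcases hM.le_iff.1 hKM with hK | hK
  · rwa [hK, mem_bot] at hjm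
  · have hMJM : M.asIdeal ≤ Ring.jacobson R • M.asIdeal := fun x hx => by
      rwa [← hK, mem_asIdeal, Ideal.mem_toTwoSided] at hx
    have hMbot := (IsNoetherian.noetherian _).eq_bot_of_le_jacobson_smul hMJM
    refine absurd (eq_bot_iff.2 fun x hx => ?_) hM.1
    rwa [← mem_asIdeal, hMbot, Ideal.mem_bot, ← mem_bot] at hx

lemma CompleteOrthogonalIdempotents.exists_mul_mul_ne_zero {R ι : Type*} [Ring R] [Fintype ι]
    {e : ι → R} (he : CompleteOrthogonalIdempotents e) {x : R} (hx : x ≠ 0) :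
    ∃ i j, e i * x * e j ≠ 0 := by
  by_contra! h
  refine hx ?_
  calc x = (∑ i, e i) * x * ∑ j, e j := by rw [he.complete, one_mul, mul_one]
    _ = 0 := by simp [Finset.sum_mul, Finset.mul_sum, h]

section Algebra

variable {𝕜 R : Type*} [Field 𝕜] [Ring R] [Algebra 𝕜 R]

lemma mul_eq_zero_of_forall_mul_mul_eq_zero {φ : R →ₗ[𝕜] 𝕜}
    (hsymm : ∀ a b : R, φ (a * b) = φ (b * a))
    (hrad : ∀ a : R, (∀ x y : R, φ (x * a * y) = 0) → a = 0) {a b : R}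
    (h : ∀ x, b * (x * a) = 0) : a * b = 0 :=
  hrad _ fun x y => by
    rw [show x * (a * b) * y = x * a * (b * y) by noncomm_ring, hsymm,
      show b * y * (x * a) = b * (y * x * a) by noncomm_ring, h, map_zero]

def IsBiEigenvector (χ ψ : R → 𝕜) (u : R) : Prop :=
  ∀ p, p * u = χ p • u ∧ u * p = ψ p • u

namespace IsBiEigenvector

variable {χ ψ : R → 𝕜} {u v : R}

lemma mul_mul (hu : IsBiEigenvector χ ψ u) (x y : R) : x * u * y = (χ x * ψ y) • u := by
  rw [(hu x).1, smul_mul_assoc, (hu y).2, smul_smul]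

lemma map {M : TwoSidedIdeal R} (f : R →ₗ[𝕜] R)
    (hf : ∀ m ∈ M, ∀ p : R, f (p * m) = p * f m ∧ f (m * p) = f m * p)
    (hu : IsBiEigenvector χ ψ u) (huM : u ∈ M) : IsBiEigenvector χ ψ (f u) := fun p =>
  ⟨by rw [← (hf u huM p).1, (hu p).1, map_smul], by rw [← (hf u huM p).2, (hu p).2, map_smul]⟩

variable {φ : R →ₗ[𝕜] 𝕜}

lemma map_ne_zero (hrad : ∀ a : R, (∀ x y : R, φ (x * a * y) = 0) → a = 0)
    (hu : IsBiEigenvector χ ψ u) (hu0 : u ≠ 0) : φ u ≠ 0 := fun h =>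
  hu0 <| hrad u fun x y => by rw [hu.mul_mul, map_smul, h, smul_zero]

lemma eq_smul (hrad : ∀ a : R, (∀ x y : R, φ (x * a * y) = 0) → a = 0)
    (hu : IsBiEigenvector χ ψ u) (hv : IsBiEigenvector χ ψ v) (hv0 : φ v ≠ 0) :
    u = (φ u / φ v) • v := by
  rw [← sub_eq_zero]
  refine hrad _ fun x y => ?_
  rw [mul_sub, sub_mul, mul_smul_comm, smul_mul_assoc, hu.mul_mul, hv.mul_mul, map_sub,
    map_smul, map_smul, map_smul, smul_eq_mul, smul_eq_mul, smul_eq_mul]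
  field_simp
  ring

end IsBiEigenvector

variable {ι : Type*} [Fintype ι] [DecidableEq ι] {e : ι → R}

namespace OrthogonalIdempotents

lemma sum_smul_mul (he : OrthogonalIdempotents e) (c : ι → 𝕜) (i : ι) :
    (∑ l, c l • e l) * e i = c i • e i := by
  simp [Finset.sum_mul, he.mul_eq]

lemma mul_sum_smul (he : OrthogonalIdempotents e) (c : ι → 𝕜) (i : ι) :
    e i * (∑ l, c l • e l) = c i • e i := by
  simp [Finset.mul_sum, he.mul_eq]

lemma mul_eq_smul_of_sub_mul_eq_zero (he : OrthogonalIdempotents e) {a u : R} {c : ι → 𝕜}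
    {i : ι} (h : (a - ∑ l, c l • e l) * u = 0) (hu : e i * u = u) : a * u = c i • u := by
  rw [sub_mul, sub_eq_zero] at h
  rw [h, ← hu, ← mul_assoc, he.sum_smul_mul, smul_mul_assoc]

lemma mul_eq_smul_of_mul_sub_eq_zero (he : OrthogonalIdempotents e) {a u : R} {c : ι → 𝕜}
    {i : ι} (h : u * (a - ∑ l, c l • e l) = 0) (hu : u * e i = u) : u * a = c i • u := by
  rw [mul_sub, sub_eq_zero] at h
  rw [h, ← hu, mul_assoc, he.mul_sum_smul, mul_smul_comm]

end OrthogonalIdempotents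

theorem TwoSidedIdeal.exists_isBiEigenvector (he : CompleteOrthogonalIdempotents e) {J : Set R}
    (hbasic : ∀ a : R, ∃ c : ι → 𝕜, a - ∑ i, c i • e i ∈ J) {M : TwoSidedIdeal R} (hM : M ≠ ⊥)
    (hJM : ∀ j ∈ J, ∀ m ∈ M, j * m = 0) (hMJ : ∀ m ∈ M, ∀ j ∈ J, m * j = 0) :
    ∃ u ∈ M, u ≠ 0 ∧ ∃ χ ψ : R → 𝕜, IsBiEigenvector χ ψ u := by
  obtain ⟨m, hm, hm0⟩ : ∃ m ∈ M, m ≠ 0 := by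
    by_contra! h
    exact hM (eq_bot_iff.2 fun x hx => (mem_bot R).2 (h x hx))
  obtain ⟨i, j, hu0⟩ := he.exists_mul_mul_ne_zero hm0
  have huM : e i * m * e j ∈ M := M.mul_mem_right _ _ (M.mul_mem_left _ _ hm)
  choose c hc using hbasic
  refine ⟨_, huM, hu0, fun p => c p i, fun p => c p j, fun p => ⟨?_, ?_⟩⟩
  · refine he.mul_eq_smul_of_sub_mul_eq_zero (hJM _ (hc p) _ huM) ?_
    rw [← mul_assoc, ← mul_assoc, (he.idem i).eq]
  · refine he.mul_eq_smul_of_mul_sub_eq_zero (hMJ _ huM _ (hc p)) ?_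
    rw [mul_assoc, (he.idem j).eq]

end Algebra

theorem stmt_4_general {P : Type*} [Ring P] [Algebra ℂ P] [FiniteDimensional ℂ P]
    (φ : P →ₗ[ℂ] ℂ) (hsymm : ∀ a b : P, φ (a * b) = φ (b * a))
    (hrad : ∀ a : P, (∀ x y : P, φ (x * a * y) = 0) → a = 0)
    (k : ℕ) (e : Fin k → P)
    (hidem : ∀ i, e i * e i = e i)
    (horth : ∀ i j, i ≠ j → e i * e j = 0)
    (hsum : ∑ i, e i = 1)
    (hbasic : ∀ a : P, ∃ c : Fin k → ℂ,
      a - ∑ i, c i • e i ∈ Ideal.jacobson (⊥ : Ideal P))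
    (M N : TwoSidedIdeal P) (hM : IsAtom M) (hN : IsAtom N) (hMN : M ≠ N) :
    ¬ ∃ f : P →ₗ[ℂ] P,
        (f '' (M : Set P) = (N : Set P)) ∧ Set.InjOn f (M : Set P) ∧
        (∀ m ∈ M, ∀ p : P, f (p * m) = p * f m ∧ f (m * p) = f m * p) := by
  rintro ⟨f, hfim, hfinj, hfbi⟩
  have he : CompleteOrthogonalIdempotents e := ⟨⟨hidem, horth⟩, hsum⟩
  have : IsNoetherianRing P := isNoetherian_of_tower ℂ inferInstance
  have hJM : ∀ j ∈ Ideal.jacobson (⊥ : Ideal P), ∀ m ∈ M, j * m = 0 := fun j hj _ hm =>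
    TwoSidedIdeal.jacobson_mul_eq_zero_of_isAtom hM (by rwa [← Ideal.jacobson_bot]) hm
  have hMJ : ∀ m ∈ M, ∀ j ∈ Ideal.jacobson (⊥ : Ideal P), m * j = 0 := fun m hm j hj =>
    mul_eq_zero_of_forall_mul_mul_eq_zero hsymm hrad fun x => hJM j hj _ (M.mul_mem_left x m hm)
  obtain ⟨u, huM, hu0, χ, ψ, hu⟩ := M.exists_isBiEigenvector he hbasic hM.1 hJM hMJ
  have hv := hu.map f hfbi huM
  have hvN : f u ∈ N := by
    rw [← SetLike.mem_coe, ← hfim]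
    exact Set.mem_image_of_mem f huM
  have hv0 : f u ≠ 0 := fun h => hu0 (hfinj huM M.zero_mem (h.trans (map_zero f).symm))
  have huN : u ∈ N := by
    rw [hu.eq_smul hrad hv (hv.map_ne_zero hrad hv0), Algebra.smul_def]
    exact N.mul_mem_left _ _ hvN
  have huMN : u ∈ M ⊓ N := (TwoSidedIdeal.mem_inf P).2 ⟨huM, huN⟩
  rw [(hM.disjoint_of_ne hN hMN).eq_bot, TwoSidedIdeal.mem_bot] at huMN
  exact hu0 huMN

/-- In a finite-dimensional indecomposable basic symmetric `ℂ`-algebra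
`P` with symmetric linear functional `φ` and `Rad(φ) = 0`, distinct minimal two-sided
ideals of `P` are pairwise non-isomorphic as `P`-bimodules. -/
theorem stmt_4 {P : Type*} [Ring P] [Algebra ℂ P] [FiniteDimensional ℂ P]
    (φ : P →ₗ[ℂ] ℂ) (hsymm : ∀ a b : P, φ (a * b) = φ (b * a))
    (hrad : ∀ a : P, (∀ x y : P, φ (x * a * y) = 0) → a = 0)
    (k : ℕ) (e : Fin k → P)
    (hidem : ∀ i, e i * e i = e i)
    (horth : ∀ i j, i ≠ j → e i * e j = 0)
    (hsum : ∑ i, e i = 1)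
    (hprim : ∀ i, ∀ f : P, f * f = f → f * e i = f → e i * f = f → f = 0 ∨ f = e i)
    (hbasic : ∀ a : P, ∃ c : Fin k → ℂ,
      a - ∑ i, c i • e i ∈ Ideal.jacobson (⊥ : Ideal P))
    (hindec : ∀ c : P, (∀ p : P, c * p = p * c) → c * c = c → c = 0 ∨ c = 1)
    (M N : TwoSidedIdeal P) (hM : IsAtom M) (hN : IsAtom N) (hMN : M ≠ N) :
    ¬ ∃ f : P →ₗ[ℂ] P,
        (f '' (M : Set P) = (N : Set P)) ∧ Set.InjOn f (M : Set P) ∧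
        (∀ m ∈ M, ∀ p : P, f (p * m) = p * f m ∧ f (m * p) = f m * p) :=
  stmt_4_general φ hsymm hrad k e hidem horth hsum hbasic M N hM hN hMN
end

section
/- Let W be a finite-dimensional right module over a basic symmetric ℂ-algebra (P, φ) interlocked with φ, i.e., W ≅ ⊕_{ρ ∈ Ω} T_{p(ρ)} ⊗ ρ as right P-modules for vector spaces T_p, where Ω is the standard basis of P. Then the pseudo-trace tr^φ_W : End_P(W) → ℂ, defined as the sum over s of the traces of the matrix components α^{f_s} of α ∈ End_P(W) on the socle basis elements f_s, is a symmetric linear functional: tr^φ_W(αβ) = tr^φ_W(βα). -/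
/-- The action on the model module `W = ⊕_{ρ ∈ Ω} T_{L(ρ)} ⊗ ρ` (with `T_p = ℂ^{d p}`,
realized inside `Ω → Fin n → ℂ`) of an endomorphism with matrix components
`A ρ : T_{R ρ} → T_{L ρ}` (so `α(v_j^{e_s} ⊗ e_s) = Σ_{ρ, i} A ρ i j · v_i ⊗ ρ`),
extended `P`-linearly: the coefficient of `b μ` in `b ρ * b ν` is
`φ(b ρ · b ν · b (star μ))` by the dual-basis pairing. -/
noncomputable def modelMap {P : Type*} [Ring P] [Algebra ℂ P]
    {Ω : Type*} [Fintype Ω]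
    (φ : P →ₗ[ℂ] ℂ) (b : Ω → P) (star : Equiv.Perm Ω) {n : ℕ}
    (A : Ω → Matrix (Fin n) (Fin n) ℂ)
    (w : Ω → Fin n → ℂ) : Ω → Fin n → ℂ :=
  fun μ i => ∑ ν : Ω, ∑ ρ : Ω, ∑ j : Fin n,
    φ (b ρ * b ν * b (star μ)) * A ρ i j * w ν j

/-- The model module: functions supported in the blocks `Fin (d (L ρ))`. -/
def modelSupp {k : ℕ} {Ω : Type*} (d : Fin k → ℕ) (L : Ω → Fin k) (n : ℕ) :
    Set (Ω → Fin n → ℂ) :=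
  {w | ∀ (ρ : Ω) (i : Fin n), d (L ρ) ≤ (i : ℕ) → w ρ i = 0}

/-- Let `(P, φ)` be a finite-dimensional basic symmetric `ℂ`-algebra with
`φ(e_i) = 0`, standard basis `Ω` (primitive idempotents `e_s = b(eI s)`, socle elements
`f_s = b(fI s)` dual to them, pairing `φ(b ρ · b μ) = δ_{μ, ρ*}`, `b ρ · b ρ* = f_{L ρ}`),
and let `W ≅ ⊕_{ρ ∈ Ω} T_{L ρ} ⊗ ρ` be a right `P`-module interlocked with `φ`.  The
pseudo-trace `tr^φ_W(α) = Σ_s Σ_i α^{f_s}_{ii}` (sum of traces of the socle-components)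
is symmetric: `tr^φ_W(αβ) = tr^φ_W(βα)`.  Here `A, B` are the components of `α, β` and
`C, C'` are components of `αβ` resp. `βα`. -/
theorem stmt_12 {P : Type*} [Ring P] [Algebra ℂ P] [FiniteDimensional ℂ P]
    {k : ℕ} {Ω : Type*} [Fintype Ω] [DecidableEq Ω]
    (φ : P →ₗ[ℂ] ℂ) (hφ : ∀ a b : P, φ (a * b) = φ (b * a))
    (b : Ω → P) (hb : LinearIndependent ℂ b)
    (hbspan : Submodule.span ℂ (Set.range b) = ⊤)
    (L R : Ω → Fin k) (eI fI : Fin k → Ω) (star : Equiv.Perm Ω)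
    (hLe : ∀ s, L (eI s) = s) (hRe : ∀ s, R (eI s) = s)
    (hLf : ∀ s, L (fI s) = s) (hRf : ∀ s, R (fI s) = s)
    (hidem : ∀ s, b (eI s) * b (eI s) = b (eI s))
    (horth : ∀ s t, s ≠ t → b (eI s) * b (eI t) = 0)
    (hsum : ∑ s, b (eI s) = 1)
    (hphie : ∀ s, φ (b (eI s)) = 0)
    (hleft : ∀ ρ, b (eI (L ρ)) * b ρ = b ρ)
    (hright : ∀ ρ, b ρ * b (eI (R ρ)) = b ρ)
    (hpair : ∀ ρ μ, φ (b ρ * b μ) = if μ = star ρ then 1 else 0)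
    (hstar : ∀ s, star (eI s) = fI s)
    (hprod : ∀ ρ, b ρ * b (star ρ) = b (fI (L ρ)))
    {n : ℕ} (d : Fin k → ℕ) (hd : ∀ p, d p ≤ n)
    (A B C C' : Ω → Matrix (Fin n) (Fin n) ℂ)
    (hA : ∀ (ρ : Ω) (i j : Fin n), d (L ρ) ≤ (i : ℕ) ∨ d (R ρ) ≤ (j : ℕ) → A ρ i j = 0)
    (hB : ∀ (ρ : Ω) (i j : Fin n), d (L ρ) ≤ (i : ℕ) ∨ d (R ρ) ≤ (j : ℕ) → B ρ i j = 0)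
    (hC : ∀ (ρ : Ω) (i j : Fin n), d (L ρ) ≤ (i : ℕ) ∨ d (R ρ) ≤ (j : ℕ) → C ρ i j = 0)
    (hC' : ∀ (ρ : Ω) (i j : Fin n), d (L ρ) ≤ (i : ℕ) ∨ d (R ρ) ≤ (j : ℕ) → C' ρ i j = 0)
    (hcomp : ∀ w ∈ modelSupp d L n,
      modelMap φ b star C w = modelMap φ b star A (modelMap φ b star B w))
    (hcomp' : ∀ w ∈ modelSupp d L n,
      modelMap φ b star C' w = modelMap φ b star B (modelMap φ b star A w)) :
    ∑ s : Fin k, ∑ i : Fin n, C (fI s) i i = ∑ s : Fin k, ∑ i : Fin n, C' (fI s) i i := by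
  classical
  have hbne : ∀ ρ, b ρ ≠ 0 := fun ρ => hb.ne_zero ρ
  have hstar2 : ∀ ρ, star (star ρ) = ρ := by
    intro ρ
    have h1 : φ (b ρ * b (star ρ)) = 1 := by rw [hpair, if_pos rfl]
    have h2 := hpair (star ρ) ρ
    rw [hφ, h1] at h2
    by_contra hne
    rw [if_neg (fun h => hne h.symm)] at h2
    exact one_ne_zero h2
  have hstarf : ∀ s, star (fI s) = eI s := by
    intro s; rw [← hstar, hstar2]
  have hRL : ∀ ρ, L (star ρ) = R ρ := by
    intro ρ
    by_contra hne
    apply hbne (fI (L ρ))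
    rw [← hprod ρ]
    calc b ρ * b (star ρ)
        = (b ρ * b (eI (R ρ))) * (b (eI (L (star ρ))) * b (star ρ)) := by
          rw [hright, hleft]
      _ = b ρ * ((b (eI (R ρ)) * b (eI (L (star ρ)))) * b (star ρ)) := by
          rw [mul_assoc, ← mul_assoc (b (eI (R ρ)))]
      _ = 0 := by rw [horth _ _ (fun h => hne h.symm), zero_mul, mul_zero]
  have hRL' : ∀ ρ, R (star ρ) = L ρ := by
    intro ρ; rw [← hRL (star ρ), hstar2]
  have heR : ∀ ρ s, b ρ * b (eI s) = if R ρ = s then b ρ else 0 := by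
    intro ρ s
    by_cases h : R ρ = s
    · rw [if_pos h, ← h, hright]
    · rw [if_neg h]
      conv_lhs => rw [← hright ρ]
      rw [mul_assoc, horth _ _ h, mul_zero]
  have heL : ∀ s ρ, b (eI s) * b ρ = if L ρ = s then b ρ else 0 := by
    intro s ρ
    by_cases h : L ρ = s
    · rw [if_pos h, ← h, hleft]
    · rw [if_neg h]
      conv_lhs => rw [← hleft ρ]
      rw [← mul_assoc, horth _ _ (fun hh => h hh.symm), zero_mul]
  have hcond : ∀ ρ s, (eI s = star ρ) ↔ (ρ = fI s) := by
    intro ρ s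
    constructor
    · intro h
      rw [← hstar2 ρ, ← h, hstar]
    · intro h
      rw [h, hstarf]
  have hp1 : ∀ ρ s, φ (b ρ * b (eI s) * b (eI s)) = if ρ = fI s then 1 else 0 := by
    intro ρ s
    rw [mul_assoc, hidem, hpair]
    by_cases h : ρ = fI s
    · rw [if_pos ((hcond ρ s).mpr h), if_pos h]
    · rw [if_neg (fun hh => h ((hcond ρ s).mp hh)), if_neg h]
  have hp2 : ∀ σ s ν, φ (b σ * b (eI s) * b (star ν))
      = if ν = σ ∧ L (star ν) = s then 1 else 0 := by
    intro σ s ν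
    rw [mul_assoc, heL]
    by_cases h : L (star ν) = s
    · rw [if_pos h, hpair]
      by_cases h2 : ν = σ
      · rw [if_pos (by rw [h2]), if_pos ⟨h2, h⟩]
      · rw [if_neg (fun hh => h2 (star.injective hh)), if_neg (fun hh => h2 hh.1)]
    · rw [if_neg h, mul_zero, map_zero, if_neg (fun hh => h hh.2)]
  have hp3 : ∀ ρ s ν, φ (b ρ * b ν * b (eI s))
      = if ν = star ρ ∧ R ν = s then 1 else 0 := by
    intro ρ s ν
    rw [mul_assoc, heR]
    by_cases h : R ν = s
    · rw [if_pos h, hpair]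
      by_cases h2 : ν = star ρ
      · rw [if_pos h2, if_pos ⟨h2, h⟩]
      · rw [if_neg h2, if_neg (fun hh => h2 hh.1)]
    · rw [if_neg h, mul_zero, map_zero, if_neg (fun hh => h hh.2)]
  -- evaluation of a model map on a delta vector
  have key : ∀ (X : Ω → Matrix (Fin n) (Fin n) ℂ) (s : Fin k) (j₀ : Fin n) (μ : Ω) (i : Fin n),
      modelMap φ b star X (fun ν j => if ν = eI s ∧ j = j₀ then (1:ℂ) else 0) μ i
        = ∑ ρ, φ (b ρ * b (eI s) * b (star μ)) * X ρ i j₀ := by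
    intro X s j₀ μ i
    show (∑ ν, ∑ ρ, ∑ j, φ (b ρ * b ν * b (star μ)) * X ρ i j
        * (if ν = eI s ∧ j = j₀ then (1:ℂ) else 0)) = _
    have hν : ∀ ν, (∑ ρ, ∑ j, φ (b ρ * b ν * b (star μ)) * X ρ i j
        * (if ν = eI s ∧ j = j₀ then (1:ℂ) else 0))
        = if ν = eI s then ∑ ρ, φ (b ρ * b (eI s) * b (star μ)) * X ρ i j₀ else 0 := by
      intro ν
      by_cases h : ν = eI s
      · subst h
        rw [if_pos rfl]
        apply Finset.sum_congr rfl; intro ρ _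
        rw [Finset.sum_eq_single j₀]
        · rw [if_pos ⟨rfl, rfl⟩, mul_one]
        · intro j _ hj; rw [if_neg (fun hh => hj hh.2), mul_zero]
        · intro hh; exact absurd (Finset.mem_univ _) hh
      · rw [if_neg h]
        apply Finset.sum_eq_zero; intro ρ _
        apply Finset.sum_eq_zero; intro j _
        rw [if_neg (fun hh => h hh.1), mul_zero]
    calc _ = ∑ ν, if ν = eI s then
            ∑ ρ, φ (b ρ * b (eI s) * b (star μ)) * X ρ i j₀ else 0 :=
          Finset.sum_congr rfl (fun ν _ => hν ν)
      _ = _ := by rw [Finset.sum_ite_eq', if_pos (Finset.mem_univ _)]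
  have hwmem : ∀ (s : Fin k) (j₀ : Fin n), (j₀ : ℕ) < d s →
      (fun ν j => if ν = eI s ∧ j = j₀ then (1:ℂ) else 0) ∈ modelSupp d L n := by
    intro s j₀ hj ρ i hi
    by_cases h : ρ = eI s ∧ i = j₀
    · exfalso
      obtain ⟨h1, h2⟩ := h
      rw [h1, hLe] at hi
      rw [h2] at hi
      omega
    · exact if_neg h
  have hCval : ∀ D E F : Ω → Matrix (Fin n) (Fin n) ℂ,
      (∀ (ρ : Ω) (i j : Fin n), d (L ρ) ≤ (i:ℕ) ∨ d (R ρ) ≤ (j:ℕ) → F ρ i j = 0) →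
      (∀ (ρ : Ω) (i j : Fin n), d (L ρ) ≤ (i:ℕ) ∨ d (R ρ) ≤ (j:ℕ) → E ρ i j = 0) →
      (∀ w ∈ modelSupp d L n,
        modelMap φ b star F w = modelMap φ b star D (modelMap φ b star E w)) →
      ∀ (s : Fin k) (i j₀ : Fin n), F (fI s) i j₀ =
        ∑ ρ, if L ρ = s then ∑ j, D ρ i j * E (star ρ) j j₀ else 0 := by
    intro D E F hF hE hcmp s i j₀
    by_cases hj : (j₀ : ℕ) < d s
    · have h := congrFun (congrFun (hcmp _ (hwmem s j₀ hj)) (fI s)) i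
      rw [key F s j₀ (fI s) i] at h
      have hL : (∑ ρ, φ (b ρ * b (eI s) * b (star (fI s))) * F ρ i j₀) = F (fI s) i j₀ := by
        rw [Finset.sum_eq_single (fI s)]
        · rw [hstarf, hp1, if_pos rfl, one_mul]
        · intro ρ _ hρ; rw [hstarf, hp1, if_neg hρ, zero_mul]
        · intro hh; exact absurd (Finset.mem_univ _) hh
      rw [hL] at h
      rw [h]
      -- now compute the RHS
      have inner : ∀ (ν : Ω) (j : Fin n),
          modelMap φ b star E (fun ν j => if ν = eI s ∧ j = j₀ then (1:ℂ) else 0) ν j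
          = if L (star ν) = s then E ν j j₀ else 0 := by
        intro ν j
        rw [key E s j₀ ν j, Finset.sum_eq_single ν]
        · rw [hp2]
          by_cases hh : L (star ν) = s
          · rw [if_pos ⟨rfl, hh⟩, one_mul, if_pos hh]
          · rw [if_neg (fun hx => hh hx.2), zero_mul, if_neg hh]
        · intro σ _ hσ; rw [hp2, if_neg (fun hx => hσ hx.1.symm), zero_mul]
        · intro hh; exact absurd (Finset.mem_univ _) hh
      show (∑ ν, ∑ ρ, ∑ j, φ (b ρ * b ν * b (star (fI s))) * D ρ i j
          * modelMap φ b star E (fun ν j => if ν = eI s ∧ j = j₀ then (1:ℂ) else 0) ν j) = _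
      calc (∑ ν, ∑ ρ, ∑ j, φ (b ρ * b ν * b (star (fI s))) * D ρ i j
            * modelMap φ b star E (fun ν j => if ν = eI s ∧ j = j₀ then (1:ℂ) else 0) ν j)
          = ∑ ρ, ∑ ν, ∑ j, (if ν = star ρ ∧ R ν = s then (1:ℂ) else 0) * D ρ i j
            * (if L (star ν) = s then E ν j j₀ else 0) := by
            rw [Finset.sum_comm]
            apply Finset.sum_congr rfl; intro ρ _
            apply Finset.sum_congr rfl; intro ν _
            apply Finset.sum_congr rfl; intro j _
            rw [inner ν j, hstarf, hp3]
        _ = ∑ ρ, if L ρ = s then ∑ j, D ρ i j * E (star ρ) j j₀ else 0 := by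
            apply Finset.sum_congr rfl; intro ρ _
            rw [Finset.sum_eq_single (star ρ)]
            · by_cases hh : L ρ = s
              · rw [if_pos hh]
                apply Finset.sum_congr rfl; intro j _
                rw [if_pos ⟨rfl, (hRL' ρ).trans hh⟩, one_mul,
                  if_pos ((congrArg L (hstar2 ρ)).trans hh)]
              · rw [if_neg hh]
                apply Finset.sum_eq_zero; intro j _
                rw [if_neg (fun hx => hh (by rw [← hRL' ρ]; exact hx.2)), zero_mul, zero_mul]
            · intro ν _ hν
              apply Finset.sum_eq_zero; intro j _
              rw [if_neg (fun hx => hν hx.1), zero_mul, zero_mul]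
            · intro hh; exact absurd (Finset.mem_univ _) hh
    · push_neg at hj
      rw [hF (fI s) i j₀ (Or.inr (by rw [hRf]; exact hj))]
      symm
      apply Finset.sum_eq_zero
      intro ρ _
      split_ifs with h
      · apply Finset.sum_eq_zero; intro j _
        rw [hE (star ρ) j j₀ (Or.inr (by rw [hRL', h]; exact hj)), mul_zero]
      · rfl
  have collapse : ∀ g : Ω → Fin n → ℂ,
      (∑ s, ∑ i, ∑ ρ, if L ρ = s then g ρ i else 0) = ∑ ρ, ∑ i, g ρ i := by
    intro g
    calc (∑ s, ∑ i, ∑ ρ, if L ρ = s then g ρ i else 0)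
        = ∑ s, ∑ ρ, ∑ i, (if L ρ = s then g ρ i else 0) :=
          Finset.sum_congr rfl (fun s _ => Finset.sum_comm)
      _ = ∑ ρ, ∑ s, ∑ i, (if L ρ = s then g ρ i else 0) := Finset.sum_comm
      _ = ∑ ρ, ∑ s, if L ρ = s then ∑ i, g ρ i else 0 := by
          apply Finset.sum_congr rfl; intro ρ _
          apply Finset.sum_congr rfl; intro s _
          split_ifs <;> simp
      _ = ∑ ρ, ∑ i, g ρ i := by
          apply Finset.sum_congr rfl; intro ρ _
          rw [Finset.sum_ite_eq, if_pos (Finset.mem_univ _)]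
  have e1 : (∑ s : Fin k, ∑ i : Fin n, C (fI s) i i)
      = ∑ ρ, ∑ i, ∑ j, A ρ i j * B (star ρ) j i := by
    rw [← collapse (fun ρ i => ∑ j, A ρ i j * B (star ρ) j i)]
    apply Finset.sum_congr rfl; intro s _
    apply Finset.sum_congr rfl; intro i _
    exact hCval A B C hC hB hcomp s i i
  have e2 : (∑ s : Fin k, ∑ i : Fin n, C' (fI s) i i)
      = ∑ ρ, ∑ i, ∑ j, B ρ i j * A (star ρ) j i := by
    rw [← collapse (fun ρ i => ∑ j, B ρ i j * A (star ρ) j i)]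
    apply Finset.sum_congr rfl; intro s _
    apply Finset.sum_congr rfl; intro i _
    exact hCval B A C' hC' hA hcomp' s i i
  rw [e1, e2, ← Equiv.sum_comp star (fun ρ => ∑ i, ∑ j, B ρ i j * A (star ρ) j i)]
  apply Finset.sum_congr rfl; intro ρ _
  simp only [hstar2]
  rw [Finset.sum_comm]
  apply Finset.sum_congr rfl; intro j _
  apply Finset.sum_congr rfl; intro i _
  ring
end

section
/- Let R be a finite-dimensional ℂ-algebra with a central element z (playing the role of ω − r) and suppose 𝔑 = ker(z : R → R) (left multiplication). Let 𝔇 be the ideal of R with 𝔇/R𝔑 = soc(R/R𝔑) and 𝔈 = {a ∈ R : za ∈ soc(R)}. Then z𝔇 ⊆ soc(R) ∩ Im(z), z𝔇 ≅ 𝔇/𝔇∩R𝔑 as R-modules, and 𝔈/R𝔑 ⊆ soc(R/R𝔑); hence multiplication by z induces an isomorphism from soc(R/R𝔑) onto soc(R) ∩ Im(z). -/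
/-!
Since `ℓ` is left multiplication by `z`, it induces an embedding `f : R ⧸ 𝔑 ↪ R` with image
`zR`. The socle is functorial: every linear map sends the socle into the socle, and for an
injective map the preimage of the socle is again semisimple, hence inside the socle. So `f`
maps `soc(R ⧸ 𝔑)` isomorphically onto `soc(R) ∩ zR`, and `z𝔇 = f(𝔇 ⧸ 𝔑) = f(soc(R ⧸ 𝔑))`.
-/

namespace Submodule

variable (R M : Type*) [Ring R] [AddCommGroup M] [Module R M]

abbrev socle : Submodule R M := sSup {p : Submodule R M | IsAtom p}

variable {R M} {N : Type*} [AddCommGroup N] [Module R N]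

instance isSemisimpleModule_socle : IsSemisimpleModule R (socle R M) := by
  rw [socle, sSup_eq_iSup]
  refine isSemisimpleModule_biSup_of_isSemisimpleModule_submodule fun p hp => ?_
  have : IsSimpleModule R p := isSimpleModule_iff_isAtom.mpr hp
  infer_instance

theorem le_socle (p : Submodule R M) [IsSemisimpleModule R p] : p ≤ socle R M := by
  have hp : p = (⊤ : Submodule R p).map p.subtype := by rw [map_top, range_subtype]
  rw [hp, ← IsSemisimpleModule.sSup_simples_eq_top R p, (gc_map_comap _).l_sSup]
  refine iSup₂_le fun q hq => le_sSup ?_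
  have : IsSimpleModule R q := hq
  exact isSimpleModule_iff_isAtom.mp
    (IsSimpleModule.congr (q.equivMapOfInjective _ p.injective_subtype).symm)

theorem map_socle_le (f : N →ₗ[R] M) : (socle R N).map f ≤ socle R M := by
  have hrange : LinearMap.range (f ∘ₗ (socle R N).subtype) = (socle R N).map f := by
    rw [LinearMap.range_comp, range_subtype]
  have := IsSemisimpleModule.range (f ∘ₗ (socle R N).subtype)
  have := IsSemisimpleModule.congr (LinearEquiv.ofEq _ _ hrange).symm
  exact le_socle _

theorem comap_socle_le_of_injective (f : N →ₗ[R] M) (hf : Function.Injective f) :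
    (socle R M).comap f ≤ socle R N := by
  let g : (socle R M).comap f →ₗ[R] socle R M := f.restrict fun _ hx => hx
  have := IsSemisimpleModule.of_injective g fun _ _ h => Subtype.ext (hf (congrArg Subtype.val h))
  exact le_socle _

theorem map_socle_of_injective (f : N →ₗ[R] M) (hf : Function.Injective f) :
    (socle R N).map f = socle R M ⊓ LinearMap.range f := by
  refine le_antisymm (le_inf (map_socle_le f) LinearMap.map_le_range) ?_
  rw [inf_comm, ← map_comap_eq]
  exact map_mono (comap_socle_le_of_injective f hf)

end Submodule

open Submodule LinearMap in
theorem stmt_18_general {R : Type*} [Ring R]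
    (z : R)
    (ℓ : R →ₗ[R] R) (hℓ : ∀ a : R, ℓ a = z * a)
    (𝔇 : Submodule R R)
    (h𝔇2 : 𝔇.map (LinearMap.ker ℓ).mkQ =
      sSup {m : Submodule R (R ⧸ LinearMap.ker ℓ) | IsAtom m}) :
    (𝔇.map ℓ ≤ (sSup {I : Submodule R R | IsAtom I}) ⊓ LinearMap.range ℓ) ∧
    (Nonempty ((↥𝔇 ⧸ (LinearMap.ker ℓ).comap 𝔇.subtype) ≃ₗ[R] ↥(𝔇.map ℓ))) ∧
    ((Submodule.comap ℓ (sSup {I : Submodule R R | IsAtom I})).map (LinearMap.ker ℓ).mkQ ≤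
      sSup {m : Submodule R (R ⧸ LinearMap.ker ℓ) | IsAtom m}) ∧
    (∃ eq : ↥(sSup {m : Submodule R (R ⧸ LinearMap.ker ℓ) | IsAtom m}) ≃ₗ[R]
        ↥((sSup {I : Submodule R R | IsAtom I}) ⊓ LinearMap.range ℓ),
      ∀ (a : R) (h : (LinearMap.ker ℓ).mkQ a ∈
          sSup {m : Submodule R (R ⧸ LinearMap.ker ℓ) | IsAtom m}),
        ((eq ⟨(LinearMap.ker ℓ).mkQ a, h⟩ : R)) = z * a) := by
  set K := ker ℓ
  set f : (R ⧸ K) →ₗ[R] R := K.liftQ ℓ le_rfl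
  have hf : Function.Injective f := ker_eq_bot.mp (ker_liftQ_eq_bot' _ ℓ rfl)
  have hsoc : (socle R (R ⧸ K)).map f = socle R R ⊓ range ℓ := by
    rw [map_socle_of_injective f hf, range_liftQ]
  have hfℓ : f ∘ₗ K.mkQ = ℓ := K.liftQ_mkQ ℓ le_rfl
  have hzD : 𝔇.map ℓ = socle R R ⊓ range ℓ := by rw [← hsoc, ← hfℓ, map_comp, h𝔇2]
  refine ⟨hzD.le, ?_, ?_, ?_⟩
  · rw [← ker_domRestrict, ← range_domRestrict]
    exact ⟨(ℓ.domRestrict 𝔇).quotKerEquivRange⟩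
  · rw [← hfℓ, comap_comp, map_comap_eq_of_surjective K.mkQ_surjective]
    exact comap_socle_le_of_injective f hf
  · exact ⟨(equivMapOfInjective f hf _).trans (LinearEquiv.ofEq _ _ hsoc), fun a _ => hℓ a⟩

/-- Let `R` be a finite-dimensional `ℂ`-algebra with central element
`z`, `𝔑 = ker(z·)`, `ℓ` left multiplication by `z` (an `R`-linear endomorphism of the
left regular module).  If `𝔇` is the ideal with `𝔇/R𝔑 = soc(R/R𝔑)` and
`𝔈 = {a | za ∈ soc(R)}`, then `z𝔇 ⊆ soc(R) ∩ Im(z)`, `z𝔇 ≅ 𝔇/(𝔇 ∩ R𝔑)` as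
`R`-modules, `𝔈/R𝔑 ⊆ soc(R/R𝔑)`, and multiplication by `z` induces an isomorphism
from `soc(R/R𝔑)` onto `soc(R) ∩ Im(z)`. -/
theorem stmt_18 {R : Type*} [Ring R] [Algebra ℂ R] [FiniteDimensional ℂ R]
    (z : R) (hz : ∀ a : R, z * a = a * z)
    (ℓ : R →ₗ[R] R) (hℓ : ∀ a : R, ℓ a = z * a)
    (𝔇 : Submodule R R)
    (h𝔇1 : LinearMap.ker ℓ ≤ 𝔇)
    (h𝔇2 : 𝔇.map (LinearMap.ker ℓ).mkQ =
      sSup {m : Submodule R (R ⧸ LinearMap.ker ℓ) | IsAtom m}) :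
    (𝔇.map ℓ ≤ (sSup {I : Submodule R R | IsAtom I}) ⊓ LinearMap.range ℓ) ∧
    (Nonempty ((↥𝔇 ⧸ (LinearMap.ker ℓ).comap 𝔇.subtype) ≃ₗ[R] ↥(𝔇.map ℓ))) ∧
    ((Submodule.comap ℓ (sSup {I : Submodule R R | IsAtom I})).map (LinearMap.ker ℓ).mkQ ≤
      sSup {m : Submodule R (R ⧸ LinearMap.ker ℓ) | IsAtom m}) ∧
    (∃ eq : ↥(sSup {m : Submodule R (R ⧸ LinearMap.ker ℓ) | IsAtom m}) ≃ₗ[R]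
        ↥((sSup {I : Submodule R R | IsAtom I}) ⊓ LinearMap.range ℓ),
      ∀ (a : R) (h : (LinearMap.ker ℓ).mkQ a ∈
          sSup {m : Submodule R (R ⧸ LinearMap.ker ℓ) | IsAtom m}),
        ((eq ⟨(LinearMap.ker ℓ).mkQ a, h⟩ : R)) = z * a) :=
  stmt_18_general z ℓ hℓ 𝔇 h𝔇2
end
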